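/- Let a, b > 0, r > 1, T > 0, and for each A > (a/b)^{1/r} let y_A be the unique solution of the terminal value problem y'(t) = a − b|y(t)|^r on [0,T], y(T) = −A. Then for every t ∈ [0,T) the limit y_∞(t) := lim_{A→∞} y_A(t) exists and is a finite real number (the family y_A(t) is decreasing in A), and there exists a constant C ≥ 1, independent of t, such that 1/(C(T−t)^{1/(r−1)}) ≤ |y_∞(t)| ≤ C/((T−t)^{1/(r−1)}) for all t ∈ [0,T). -/

import Mathlib

/-!
The right-hand side `y ↦ a - b |y| ^ r` is locally Lipschitz, so two solutions of the equation
cannot cross. Comparing with the equilibrium `-z₀`, `z₀ = (a / b) ^ (1 / r)`, and with each other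
shows that `y_A < -z₀` and that `y_A(t)` decreases in `A`. For `z = -y_A` one has
`z' = b z ^ r - a`, and the substitution `u = z ^ (1 - r)` linearises the differential
inequalities `z' ≤ b z ^ r` and `(z - z₀)' ≥ b (z - z₀) ^ r` (superadditivity of `x ^ r`).
With `p = 1 / (r - 1)` this gives
`(A ^ (1 - r) + (r - 1) b (T - t)) ^ (-p) ≤ z(t) ≤ z₀ + ((r - 1) b (T - t)) ^ (-p)`.
The upper bound is uniform in `A`, so the monotone limit exists, and letting `A → ∞` in the lower
bound gives the two-sided rate `(T - t) ^ (-p)`.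
-/

open Set Filter Topology

theorem ODE_solution_unique_of_locallyLipschitz {E : Type*} [NormedAddCommGroup E]
    [NormedSpace ℝ E] {v : E → E} (hv : LocallyLipschitz v) {f g : ℝ → E} {t₀ t₁ : ℝ}
    (hf : ∀ t ∈ Icc t₀ t₁, HasDerivWithinAt f (v (f t)) (Icc t₀ t₁) t)
    (hg : ∀ t ∈ Icc t₀ t₁, HasDerivWithinAt g (v (g t)) (Icc t₀ t₁) t)
    (h : f t₀ = g t₀) : EqOn f g (Icc t₀ t₁) := by
  have hfc : ContinuousOn f (Icc t₀ t₁) := fun t ht ↦ (hf t ht).continuousWithinAt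
  have hgc : ContinuousOn g (Icc t₀ t₁) := fun t ht ↦ (hg t ht).continuousWithinAt
  have hs : IsCompact (f '' Icc t₀ t₁ ∪ g '' Icc t₀ t₁) :=
    (isCompact_Icc.image_of_continuousOn hfc).union (isCompact_Icc.image_of_continuousOn hgc)
  obtain ⟨K, hK⟩ := hv.locallyLipschitzOn.exists_lipschitzOnWith_of_compact hs
  exact ODE_solution_unique_of_mem_Icc_right (v := fun _ ↦ v) (fun _ _ ↦ hK) hfc
    (fun t ht ↦ (hf t (Ico_subset_Icc_self ht)).mono_of_mem_nhdsWithin (Icc_mem_nhdsGE_of_mem ht))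
    (fun t ht ↦ .inl (mem_image_of_mem f (Ico_subset_Icc_self ht))) hgc
    (fun t ht ↦ (hg t (Ico_subset_Icc_self ht)).mono_of_mem_nhdsWithin (Icc_mem_nhdsGE_of_mem ht))
    (fun t ht ↦ .inr (mem_image_of_mem g (Ico_subset_Icc_self ht))) h

theorem ODE_solution_lt_of_lt_right {v : ℝ → ℝ} (hv : LocallyLipschitz v) {f g : ℝ → ℝ}
    {t₀ t₁ : ℝ} (hf : ∀ t ∈ Icc t₀ t₁, HasDerivWithinAt f (v (f t)) (Icc t₀ t₁) t)
    (hg : ∀ t ∈ Icc t₀ t₁, HasDerivWithinAt g (v (g t)) (Icc t₀ t₁) t)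
    (h : f t₁ < g t₁) : ∀ t ∈ Icc t₀ t₁, f t < g t := by
  intro t ht
  by_contra! hle
  have hsub : Icc t t₁ ⊆ Icc t₀ t₁ := Icc_subset_Icc_left ht.1
  have hcont : ContinuousOn (fun s ↦ g s - f s) (Icc t t₁) := fun s hs ↦
    ((hg s (hsub hs)).continuousWithinAt.sub (hf s (hsub hs)).continuousWithinAt).mono hsub
  obtain ⟨s, hs, hfg⟩ := intermediate_value_Icc ht.2 hcont ⟨sub_nonpos.2 hle, (sub_pos.2 h).le⟩
  have hsub' : Icc s t₁ ⊆ Icc t₀ t₁ := (Icc_subset_Icc_left hs.1).trans hsub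
  have := ODE_solution_unique_of_locallyLipschitz hv
    (fun u hu ↦ (hf u (hsub' hu)).mono hsub') (fun u hu ↦ (hg u (hsub' hu)).mono hsub')
    (sub_eq_zero.1 hfg).symm (right_mem_Icc.2 hs.2)
  exact h.ne this

theorem antitoneOn_Icc_of_hasDerivWithinAt_nonpos {f f' : ℝ → ℝ} {a b : ℝ}
    (hf : ∀ x ∈ Icc a b, HasDerivWithinAt f (f' x) (Icc a b) x) (h : ∀ x ∈ Icc a b, f' x ≤ 0) :
    AntitoneOn f (Icc a b) :=
  antitoneOn_of_hasDerivWithinAt_nonpos (convex_Icc a b) (fun x hx ↦ (hf x hx).continuousWithinAt)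
    (fun x hx ↦ (hf x (interior_subset hx)).mono interior_subset)
    (fun x hx ↦ h x (interior_subset hx))

theorem monotoneOn_Icc_of_hasDerivWithinAt_nonneg {f f' : ℝ → ℝ} {a b : ℝ}
    (hf : ∀ x ∈ Icc a b, HasDerivWithinAt f (f' x) (Icc a b) x) (h : ∀ x ∈ Icc a b, 0 ≤ f' x) :
    MonotoneOn f (Icc a b) :=
  monotoneOn_of_hasDerivWithinAt_nonneg (convex_Icc a b) (fun x hx ↦ (hf x hx).continuousWithinAt)
    (fun x hx ↦ (hf x (interior_subset hx)).mono interior_subset)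
    (fun x hx ↦ h x (interior_subset hx))

theorem hasDerivWithinAt_rpow_one_sub_add_mul {w : ℝ → ℝ} {w' b r x : ℝ} {s : Set ℝ}
    (hw : HasDerivWithinAt w w' s x) (hx : 0 < w x) :
    HasDerivWithinAt (fun y ↦ w y ^ (1 - r) + (r - 1) * b * y)
      ((r - 1) * (b - w' / w x ^ r)) s x := by
  refine ((hw.rpow_const (p := 1 - r) (.inl hx.ne')).add
    ((hasDerivAt_id x).const_mul ((r - 1) * b)).hasDerivWithinAt).congr_deriv ?_
  rw [show 1 - r - 1 = -r by ring, Real.rpow_neg hx.le]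
  ring

theorem rpow_one_sub_add_le_of_mul_rpow_le_deriv {w w' : ℝ → ℝ} {b r t₀ t₁ : ℝ} (ht : t₀ ≤ t₁)
    (hr : 1 < r) (hw : ∀ s ∈ Icc t₀ t₁, HasDerivWithinAt w (w' s) (Icc t₀ t₁) s)
    (hpos : ∀ s ∈ Icc t₀ t₁, 0 < w s) (hle : ∀ s ∈ Icc t₀ t₁, b * w s ^ r ≤ w' s) :
    w t₁ ^ (1 - r) + (r - 1) * b * (t₁ - t₀) ≤ w t₀ ^ (1 - r) := by
  have := antitoneOn_Icc_of_hasDerivWithinAt_nonpos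
    (fun s hs ↦ hasDerivWithinAt_rpow_one_sub_add_mul (b := b) (r := r) (hw s hs) (hpos s hs))
    (fun s hs ↦ mul_nonpos_of_nonneg_of_nonpos (by linarith)
      (sub_nonpos.2 ((le_div_iff₀ (Real.rpow_pos_of_pos (hpos s hs) r)).2 (hle s hs))))
    (left_mem_Icc.2 ht) (right_mem_Icc.2 ht) ht
  linarith

theorem rpow_one_sub_le_add_of_deriv_le_mul_rpow {w w' : ℝ → ℝ} {b r t₀ t₁ : ℝ} (ht : t₀ ≤ t₁)
    (hr : 1 < r) (hw : ∀ s ∈ Icc t₀ t₁, HasDerivWithinAt w (w' s) (Icc t₀ t₁) s)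
    (hpos : ∀ s ∈ Icc t₀ t₁, 0 < w s) (hle : ∀ s ∈ Icc t₀ t₁, w' s ≤ b * w s ^ r) :
    w t₀ ^ (1 - r) ≤ w t₁ ^ (1 - r) + (r - 1) * b * (t₁ - t₀) := by
  have := monotoneOn_Icc_of_hasDerivWithinAt_nonneg
    (fun s hs ↦ hasDerivWithinAt_rpow_one_sub_add_mul (b := b) (r := r) (hw s hs) (hpos s hs))
    (fun s hs ↦ mul_nonneg (by linarith)
      (sub_nonneg.2 ((div_le_iff₀ (Real.rpow_pos_of_pos (hpos s hs) r)).2 (hle s hs))))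
    (left_mem_Icc.2 ht) (right_mem_Icc.2 ht) ht
  linarith

theorem rpow_one_sub_rpow_inv_sub_one {r x : ℝ} (hr : 1 < r) (hx : 0 ≤ x) :
    (x ^ (1 - r)) ^ (1 / (r - 1)) = x⁻¹ := by
  have : (1 - r) * (1 / (r - 1)) = -1 := by field_simp [(sub_pos.2 hr).ne']; ring
  rw [← Real.rpow_mul hx, this, Real.rpow_neg_one]

theorem inv_rpow_le_of_rpow_one_sub_le {r x β : ℝ} (hr : 1 < r) (hx : 0 < x)
    (h : x ^ (1 - r) ≤ β) : (β ^ (1 / (r - 1)))⁻¹ ≤ x := by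
  have hβ : 0 < β := (Real.rpow_pos_of_pos hx _).trans_le h
  have := Real.rpow_le_rpow (z := 1 / (r - 1)) (Real.rpow_nonneg hx.le _) h
    (by rw [one_div_nonneg]; linarith)
  rw [rpow_one_sub_rpow_inv_sub_one hr hx.le] at this
  exact inv_le_of_inv_le₀ hx this

theorem le_inv_rpow_of_le_rpow_one_sub {r x β : ℝ} (hr : 1 < r) (hx : 0 < x) (hβ : 0 < β)
    (h : β ≤ x ^ (1 - r)) : x ≤ (β ^ (1 / (r - 1)))⁻¹ := by
  have := Real.rpow_le_rpow (z := 1 / (r - 1)) hβ.le h (by rw [one_div_nonneg]; linarith)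
  rw [rpow_one_sub_rpow_inv_sub_one hr hx.le] at this
  exact le_inv_of_le_inv₀ (Real.rpow_pos_of_pos hβ _) this

theorem exists_tendsto_atTop_of_antitoneOn_Ioi {g : ℝ → ℝ} {c : ℝ} (hg : AntitoneOn g (Ioi c))
    (hbdd : BddBelow (g '' Ioi c)) : ∃ l, Tendsto g atTop (𝓝 l) := by
  have hmem : ∀ x, max x (c + 1) ∈ Ioi c := fun x ↦ lt_of_lt_of_le (lt_add_one c) (le_max_right _ _)
  refine ⟨_, (tendsto_atTop_ciInf (f := fun x ↦ g (max x (c + 1)))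
    (fun x y hxy ↦ hg (hmem x) (hmem y) (max_le_max_right _ hxy))
    (hbdd.mono (range_subset_iff.2 fun x ↦ mem_image_of_mem g (hmem x)))).congr' ?_⟩
  filter_upwards [eventually_ge_atTop (c + 1)] with x hx
  rw [max_eq_left hx]

namespace TerminalValueProblem

variable {a b r T : ℝ} {y : ℝ → ℝ} {A t : ℝ}

def IsSolution (a b r T : ℝ) (y : ℝ → ℝ) : Prop :=
  ∀ t ∈ Icc 0 T, HasDerivWithinAt y (a - b * |y t| ^ r) (Icc 0 T) t

theorem locallyLipschitz_rhs (a b : ℝ) (hr : 1 < r) :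
    LocallyLipschitz fun y : ℝ ↦ a - b * |y| ^ r := by
  have : ContDiff ℝ 1 fun y : ℝ ↦ a - b * ‖y‖ ^ r :=
    contDiff_const.sub (contDiff_const.mul (contDiff_norm_rpow hr))
  simpa only [Real.norm_eq_abs] using this.locallyLipschitz

theorem equilibrium_rpow (ha : 0 < a) (hb : 0 < b) (hr : 1 < r) :
    ((a / b) ^ (1 / r)) ^ r = a / b := by
  rw [one_div, Real.rpow_inv_rpow (div_pos ha hb).le (by positivity)]

theorem isSolution_equilibrium (ha : 0 < a) (hb : 0 < b) (hr : 1 < r) :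
    IsSolution a b r T fun _ ↦ -(a / b) ^ (1 / r) := fun _ _ ↦ by
  rw [abs_neg, abs_of_pos (by positivity), equilibrium_rpow ha hb hr, mul_div_cancel₀ a hb.ne',
    sub_self]
  exact hasDerivWithinAt_const _ _ _

theorem IsSolution.lt_neg_equilibrium (ha : 0 < a) (hb : 0 < b) (hr : 1 < r)
    (hy : IsSolution a b r T y) (hA : (a / b) ^ (1 / r) < A) (hyT : y T = -A) :
    ∀ t ∈ Icc 0 T, y t < -(a / b) ^ (1 / r) :=
  ODE_solution_lt_of_lt_right (locallyLipschitz_rhs a b hr) hy (isSolution_equilibrium ha hb hr)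
    (by rw [hyT]; exact neg_lt_neg hA)

theorem IsSolution.hasDerivWithinAt_neg (ha : 0 < a) (hb : 0 < b) (hr : 1 < r)
    (hy : IsSolution a b r T y) (hA : (a / b) ^ (1 / r) < A) (hyT : y T = -A)
    (ht : t ∈ Icc 0 T) :
    ∀ s ∈ Icc t T, HasDerivWithinAt (fun s ↦ -y s) (b * (-y s) ^ r - a) (Icc t T) s := by
  have hsub : Icc t T ⊆ Icc 0 T := Icc_subset_Icc_left ht.1
  intro s hs
  have hneg : y s < 0 := (hy.lt_neg_equilibrium ha hb hr hA hyT s (hsub hs)).trans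
    (neg_neg_of_pos (by positivity))
  exact ((hy s (hsub hs)).mono hsub).neg.congr_deriv (by rw [abs_of_neg hneg]; ring)

theorem IsSolution.neg_rpow_one_sub_le (ha : 0 < a) (hb : 0 < b) (hr : 1 < r)
    (hy : IsSolution a b r T y) (hA : (a / b) ^ (1 / r) < A) (hyT : y T = -A)
    (ht : t ∈ Icc 0 T) :
    (-y t) ^ (1 - r) ≤ A ^ (1 - r) + (r - 1) * b * (T - t) := by
  have hlt := hy.lt_neg_equilibrium ha hb hr hA hyT
  have hz₀ : 0 < (a / b) ^ (1 / r) := by positivity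
  have := rpow_one_sub_le_add_of_deriv_le_mul_rpow (b := b) ht.2 hr
    (hy.hasDerivWithinAt_neg ha hb hr hA hyT ht)
    (fun s hs ↦ by linarith [hlt s (Icc_subset_Icc_left ht.1 hs)]) (fun s _ ↦ by linarith)
  rwa [hyT, neg_neg] at this

theorem IsSolution.le_neg_sub_equilibrium_rpow_one_sub (ha : 0 < a) (hb : 0 < b) (hr : 1 < r)
    (hy : IsSolution a b r T y) (hA : (a / b) ^ (1 / r) < A) (hyT : y T = -A)
    (ht : t ∈ Icc 0 T) :
    (r - 1) * b * (T - t) ≤ (-y t - (a / b) ^ (1 / r)) ^ (1 - r) := by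
  have hlt := hy.lt_neg_equilibrium ha hb hr hA hyT
  have hz₀ : 0 < (a / b) ^ (1 / r) := by positivity
  have hgap (s : ℝ) (hs : s ∈ Icc t T) : 0 < -y s - (a / b) ^ (1 / r) := by
    linarith [hlt s (Icc_subset_Icc_left ht.1 hs)]
  have := rpow_one_sub_add_le_of_mul_rpow_le_deriv (b := b) ht.2 hr
    (fun s hs ↦ (hy.hasDerivWithinAt_neg ha hb hr hA hyT ht s hs).sub_const ((a / b) ^ (1 / r)))
    hgap fun s hs ↦ by
      have hsuper := Real.add_rpow_le_rpow_add (hgap s hs).le hz₀.le hr.le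
      rw [sub_add_cancel, equilibrium_rpow ha hb hr] at hsuper
      have := mul_le_mul_of_nonneg_left hsuper hb.le
      rw [mul_add, mul_div_cancel₀ a hb.ne'] at this
      linarith
  rw [hyT, neg_neg] at this
  linarith [Real.rpow_nonneg (sub_pos.2 hA).le (1 - r)]

theorem IsSolution.neg_le (ha : 0 < a) (hb : 0 < b) (hr : 1 < r) (hy : IsSolution a b r T y)
    (hA : (a / b) ^ (1 / r) < A) (hyT : y T = -A) (ht : t ∈ Ico 0 T) :
    -y t ≤ (a / b) ^ (1 / r) + (((r - 1) * b * (T - t)) ^ (1 / (r - 1)))⁻¹ := by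
  have hβ : 0 < (r - 1) * b * (T - t) := by
    have := sub_pos.2 hr; have := sub_pos.2 ht.2; positivity
  have := le_inv_rpow_of_le_rpow_one_sub hr
    (by linarith [hy.lt_neg_equilibrium ha hb hr hA hyT t (Ico_subset_Icc_self ht)]) hβ
    (hy.le_neg_sub_equilibrium_rpow_one_sub ha hb hr hA hyT (Ico_subset_Icc_self ht))
  linarith

section Family

variable {Y : ℝ → ℝ → ℝ}

theorem antitoneOn_terminal_value (hr : 1 < r)
    (hY : ∀ A, (a / b) ^ (1 / r) < A → IsSolution a b r T (Y A) ∧ Y A T = -A)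
    (ht : t ∈ Icc 0 T) : AntitoneOn (fun A ↦ Y A t) (Ioi ((a / b) ^ (1 / r))) := by
  intro A hA A' hA' hAA'
  rcases hAA'.eq_or_lt with rfl | hlt
  · exact le_rfl
  refine (ODE_solution_lt_of_lt_right (locallyLipschitz_rhs a b hr) (hY A' hA').1 (hY A hA).1
    ?_ t ht).le
  rw [(hY A hA).2, (hY A' hA').2]
  exact neg_lt_neg hlt

theorem bddBelow_terminal_values (ha : 0 < a) (hb : 0 < b) (hr : 1 < r)
    (hY : ∀ A, (a / b) ^ (1 / r) < A → IsSolution a b r T (Y A) ∧ Y A T = -A)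
    (ht : t ∈ Ico 0 T) : BddBelow ((fun A ↦ Y A t) '' Ioi ((a / b) ^ (1 / r))) := by
  refine ⟨-((a / b) ^ (1 / r) + (((r - 1) * b * (T - t)) ^ (1 / (r - 1)))⁻¹), ?_⟩
  rintro _ ⟨A, hA, rfl⟩
  linarith [(hY A hA).1.neg_le ha hb hr hA (hY A hA).2 ht]

theorem neg_limit_bounds (ha : 0 < a) (hb : 0 < b) (hr : 1 < r)
    (hY : ∀ A, (a / b) ^ (1 / r) < A → IsSolution a b r T (Y A) ∧ Y A T = -A)
    (ht : t ∈ Ico 0 T) {l : ℝ} (hl : Tendsto (fun A ↦ Y A t) atTop (𝓝 l)) :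
    (((r - 1) * b * (T - t)) ^ (1 / (r - 1)))⁻¹ ≤ -l ∧
      -l ≤ (a / b) ^ (1 / r) + (((r - 1) * b * (T - t)) ^ (1 / (r - 1)))⁻¹ := by
  have ht' := Ico_subset_Icc_self ht
  have hle : ∀ A, (a / b) ^ (1 / r) < A → l ≤ Y A t := fun A hA ↦ le_of_tendsto hl <| by
    filter_upwards [eventually_ge_atTop A] with A' hA'
    exact antitoneOn_terminal_value hr hY ht' hA (hA.trans_le hA') hA'
  have hneg : ∀ A, (a / b) ^ (1 / r) < A → Y A t < 0 := fun A hA ↦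
    ((hY A hA).1.lt_neg_equilibrium ha hb hr hA (hY A hA).2 t ht').trans
      (neg_neg_of_pos (by positivity))
  have hl0 : 0 < -l := by
    linarith [hle _ (lt_add_one ((a / b) ^ (1 / r))), hneg _ (lt_add_one ((a / b) ^ (1 / r)))]
  constructor
  · have hlim : Tendsto (fun A : ℝ ↦ A ^ (1 - r) + (r - 1) * b * (T - t)) atTop
        (𝓝 ((r - 1) * b * (T - t))) := by
      simpa only [neg_sub, zero_add] using
        (tendsto_rpow_neg_atTop (sub_pos.2 hr)).add_const ((r - 1) * b * (T - t))
    refine inv_rpow_le_of_rpow_one_sub_le hr hl0 (ge_of_tendsto hlim ?_)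
    filter_upwards [eventually_gt_atTop ((a / b) ^ (1 / r))] with A hA
    calc (-l) ^ (1 - r) ≤ (-Y A t) ^ (1 - r) :=
          Real.rpow_le_rpow_of_nonpos (by linarith [hneg A hA]) (by linarith [hle A hA])
            (by linarith)
      _ ≤ A ^ (1 - r) + (r - 1) * b * (T - t) :=
          (hY A hA).1.neg_rpow_one_sub_le ha hb hr hA (hY A hA).2 ht'
  · have : -((a / b) ^ (1 / r) + (((r - 1) * b * (T - t)) ^ (1 / (r - 1)))⁻¹) ≤ l :=
      ge_of_tendsto hl <| (eventually_gt_atTop _).mono fun A hA ↦ by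
        linarith [(hY A hA).1.neg_le ha hb hr hA (hY A hA).2 ht]
    linarith

/-- `κ = ((r - 1) b) ^ (1 / (r - 1))` is the blow-up rate of `z' = b z ^ r`; the term
`z₀ T ^ (1 / (r - 1))` absorbs the equilibrium `z₀ = (a / b) ^ (1 / r)`. -/
noncomputable def blowupConst (a b r T : ℝ) : ℝ :=
  1 + ((r - 1) * b) ^ (1 / (r - 1)) + (a / b) ^ (1 / r) * T ^ (1 / (r - 1)) +
    (((r - 1) * b) ^ (1 / (r - 1)))⁻¹

theorem one_le_blowupConst (ha : 0 < a) (hb : 0 < b) (hr : 1 < r) (hT : 0 < T) :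
    1 ≤ blowupConst a b r T := by
  have := sub_pos.2 hr
  unfold blowupConst
  have : 0 ≤ ((r - 1) * b) ^ (1 / (r - 1)) + (a / b) ^ (1 / r) * T ^ (1 / (r - 1)) +
    (((r - 1) * b) ^ (1 / (r - 1)))⁻¹ := by positivity
  linarith

theorem abs_limit_bounds {l : ℝ} (ha : 0 < a) (hb : 0 < b) (hr : 1 < r)
    (hY : ∀ A, (a / b) ^ (1 / r) < A → IsSolution a b r T (Y A) ∧ Y A T = -A)
    (ht : t ∈ Ico 0 T) (hl : Tendsto (fun A ↦ Y A t) atTop (𝓝 l)) :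
    1 / (blowupConst a b r T * (T - t) ^ (1 / (r - 1))) ≤ |l| ∧
      |l| ≤ blowupConst a b r T / (T - t) ^ (1 / (r - 1)) := by
  obtain ⟨hlo, hhi⟩ := neg_limit_bounds ha hb hr hY ht hl
  have hc : 0 < (r - 1) * b := mul_pos (sub_pos.2 hr) hb
  have hTt : 0 < T - t := sub_pos.2 ht.2
  rw [Real.mul_rpow hc.le hTt.le] at hlo hhi
  set κ := ((r - 1) * b) ^ (1 / (r - 1))
  set X := (T - t) ^ (1 / (r - 1))
  have hκ : 0 < κ := by positivity
  have hX : 0 < X := by positivity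
  have hXT : X ≤ T ^ (1 / (r - 1)) :=
    Real.rpow_le_rpow hTt.le (by linarith [ht.1]) (by rw [one_div_nonneg]; linarith)
  have hz₀ : 0 < (a / b) ^ (1 / r) := by positivity
  rw [abs_of_neg (by linarith [inv_pos.2 (mul_pos hκ hX)])]
  unfold blowupConst
  constructor
  · calc 1 / ((1 + κ + (a / b) ^ (1 / r) * T ^ (1 / (r - 1)) + κ⁻¹) * X) ≤ (κ * X)⁻¹ := by
          rw [one_div]
          gcongr
          linarith [mul_pos hz₀ (hX.trans_le hXT), inv_pos.2 hκ]
      _ ≤ -l := hlo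
  · calc -l ≤ (a / b) ^ (1 / r) + (κ * X)⁻¹ := hhi
      _ = ((a / b) ^ (1 / r) * X + κ⁻¹) / X := by field_simp
      _ ≤ (1 + κ + (a / b) ^ (1 / r) * T ^ (1 / (r - 1)) + κ⁻¹) / X := by
          gcongr
          linarith [mul_le_mul_of_nonneg_left hXT hz₀.le]

end Family

end TerminalValueProblem

open TerminalValueProblem

/-- existence of the pointwise singular limit y_∞ of the
solutions y_A as A → ∞ (monotone decreasing in A), together with two-sided
blow-up bounds for |y_∞|. -/
theorem stmt_18 (a b r T : ℝ) (ha : 0 < a) (hb : 0 < b) (hr : 1 < r)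
    (hT : 0 < T)
    (Y : ℝ → ℝ → ℝ)
    (hY : ∀ A : ℝ, (a / b) ^ (1 / r) < A →
      (∀ t ∈ Set.Icc (0:ℝ) T,
        HasDerivWithinAt (Y A) (a - b * |Y A t| ^ r) (Set.Icc (0:ℝ) T) t) ∧
      Y A T = -A) :
    (∀ t ∈ Set.Ico (0:ℝ) T, ∀ A A' : ℝ,
      (a / b) ^ (1 / r) < A → A ≤ A' → Y A' t ≤ Y A t) ∧
    ∃ yinf : ℝ → ℝ,
      (∀ t ∈ Set.Ico (0:ℝ) T,
        Filter.Tendsto (fun A => Y A t) Filter.atTop (nhds (yinf t))) ∧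
      ∃ C : ℝ, 1 ≤ C ∧ ∀ t ∈ Set.Ico (0:ℝ) T,
        1 / (C * (T - t) ^ (1 / (r - 1))) ≤ |yinf t| ∧
        |yinf t| ≤ C / (T - t) ^ (1 / (r - 1)) := by
  have hanti (t : ℝ) (ht : t ∈ Ico 0 T) :=
    antitoneOn_terminal_value hr hY (Ico_subset_Icc_self ht)
  have hlim (t : ℝ) (ht : t ∈ Ico 0 T) : ∃ l, Tendsto (fun A ↦ Y A t) atTop (𝓝 l) :=
    exists_tendsto_atTop_of_antitoneOn_Ioi (hanti t ht) (bddBelow_terminal_values ha hb hr hY ht)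
  choose! yinf hyinf using hlim
  exact ⟨fun t ht A A' hA hAA' ↦ hanti t ht hA (hA.trans_le hAA') hAA', yinf, hyinf,
    blowupConst a b r T, one_le_blowupConst ha hb hr hT,
    fun t ht ↦ abs_limit_bounds ha hb hr hY ht (hyinf t ht)⟩
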